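/- Starting from k^ℓ labeled chips on the root (ℓ ≥ 1) and performing firing steps only at the root until the root holds no chips (so the root fires exactly k^{ℓ−1} times), call the resulting function from {1,…,k^ℓ} to {1,…,k} sending each chip label to the index of the root's child on which it lies a dispersion. The number of distinct dispersions arising over all such firing sequences equals C_{k, k^{ℓ−1}}, the k^{ℓ−1}-th k-dimensional Catalan number. -/

import Mathlib

/-- A firing step performed at the specific vertex `v`. -/
def FireStepAt (k N v : ℕ) (c c' : Fin N → ℕ) : Prop :=
  ∃ t : Fin k → Fin N,
    StrictMono t ∧
    (∀ j, c (t j) = v) ∧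
    (∀ j : Fin k, c' (t j) = k * (v - 1) + (j : ℕ) + 2) ∧
    (∀ i : Fin N, (∀ j, i ≠ t j) → c' i = c i)

/-- `A_{k,m}` : ballot sequences of length `k*m` with values in `Fin k` (value `j`
representing `j+1 ∈ {1,…,k}`): each value occurs exactly `m` times, and in every prefix
the number of occurrences of `j` is at least the number of occurrences of `j+1`. -/
def CatalanSet (k m : ℕ) : Set (Fin (k * m) → Fin k) :=
  {a | (∀ v : Fin k, (Finset.univ.filter (fun i => a i = v)).card = m) ∧
    ∀ (p j : ℕ), j + 1 < k →
      (Finset.univ.filter (fun i : Fin (k * m) => (i : ℕ) < p ∧ (a i : ℕ) = j + 1)).card ≤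
      (Finset.univ.filter (fun i : Fin (k * m) => (i : ℕ) < p ∧ (a i : ℕ) = j)).card}

/-- The set of dispersions of `k^ℓ` chips from the root to its `k` children:
`d i` (0-based, representing child index `d i + 1 ∈ {1,…,k}`) records on which child
chip `i` lies after firing only at the root until the root holds no chips. -/
def Dispersions (k ℓ : ℕ) : Set (Fin (k ^ ℓ) → Fin k) :=
  {d | ∃ c : Fin (k ^ ℓ) → ℕ,
    Relation.ReflTransGen (FireStepAt k (k ^ ℓ) 1) (fun _ => 1) c ∧
    (∀ i, c i ≠ 1) ∧
    (∀ i, c i = (d i : ℕ) + 2)}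

/-!
A configuration reachable by `s` root firings is *balanced*: every child of the root holds `s`
chips and, among the chips with label below any `p`, child `j` holds at least as many as child
`j + 1`. Firing preserves this because the fired chips increase in label with the child index.
Conversely, in a balanced configuration with `s > 0` the largest labels on the successive
children increase (by the prefix inequality just after the largest label on child `j + 1`), so
moving them back to the root undoes a firing and leaves a balanced configuration with `s - 1`.
A final configuration, read as a word in label order, is balanced exactly when it is a ballot
sequence, with `s = k ^ (ℓ - 1)` forced by counting chips.
-/

open Finset Relation

section RootFiring

variable {k N : ℕ}

-- Chips with label below `p` on vertex `j + 2`, the root's `j`-th child counted from `0`.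
def childCount (c : Fin N → ℕ) (p j : ℕ) : ℕ := #{i : Fin N | (i : ℕ) < p ∧ c i = j + 2}

lemma childCount_eq_total_of_forall_lt {c : Fin N → ℕ} {p j : ℕ}
    (h : ∀ i : Fin N, c i = j + 2 → (i : ℕ) < p) : childCount c p j = childCount c N j := by
  unfold childCount
  congr 1
  ext i
  simpa [i.isLt] using h i

lemma childCount_lt_total_of_le {c : Fin N → ℕ} {p j : ℕ} {x : Fin N} (hx : c x = j + 2)
    (hp : p ≤ x) : childCount c p j < childCount c N j := by
  refine card_lt_card ⟨fun i hi => ?_, fun h => ?_⟩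
  · simp only [mem_filter, mem_univ, true_and] at hi ⊢
    exact ⟨i.isLt, hi.2⟩
  · have := (mem_filter.1 (h (mem_filter.2 ⟨mem_univ x, x.isLt, hx⟩))).2.1
    omega

lemma fireStepAt_one_iff {c c' : Fin N → ℕ} :
    FireStepAt k N 1 c c' ↔ ∃ t : Fin k → Fin N, StrictMono t ∧ (∀ j, c (t j) = 1) ∧
      (∀ j : Fin k, c' (t j) = j + 2) ∧ ∀ i, (∀ j, i ≠ t j) → c' i = c i := by
  simp [FireStepAt]

lemma childCount_eq_add_of_fire {c c' : Fin N → ℕ} {t : Fin k → Fin N}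
    (ht : Function.Injective t) (hc : ∀ j, c (t j) = 1) (hc' : ∀ j : Fin k, c' (t j) = j + 2)
    (hrest : ∀ i, (∀ j, i ≠ t j) → c' i = c i) (p : ℕ) (j : Fin k) :
    childCount c' p j = childCount c p j + if (t j : ℕ) < p then 1 else 0 := by
  have hpoint (i : Fin N) : (if (i : ℕ) < p ∧ c' i = j + 2 then 1 else 0) =
      (if (i : ℕ) < p ∧ c i = j + 2 then 1 else 0) + if i = t j ∧ (i : ℕ) < p then 1 else 0 := by
    by_cases hi : ∃ j', i = t j'
    · obtain ⟨j', rfl⟩ := hi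
      simp only [hc, hc', ht.eq_iff, add_left_inj, Fin.val_inj]
      rcases eq_or_ne j' j with rfl | hj <;> simp [*]
    · push Not at hi
      simp only [hrest i hi, hi j, false_and, if_false, add_zero]
  simp only [childCount, card_filter, hpoint, sum_add_distrib, ite_and, sum_ite_eq', mem_univ,
    if_true]

lemma strictMono_fin_of_lt_succ {α : Type*} [Preorder α] {f : Fin k → α}
    (h : ∀ j (hj : j + 1 < k), f ⟨j, by omega⟩ < f ⟨j + 1, hj⟩) : StrictMono f := by
  cases k with
  | zero => exact fun a => a.elim0
  | succ n => exact Fin.strictMono_iff_lt_succ.2 fun i => h i (by simp)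

structure IsRootBalanced (k : ℕ) (c : Fin N → ℕ) (s : ℕ) : Prop where
  eq_one_or : ∀ i, c i = 1 ∨ ∃ j < k, c i = j + 2
  childCount_eq : ∀ j < k, childCount c N j = s
  childCount_succ_le : ∀ p j, j + 1 < k → childCount c p (j + 1) ≤ childCount c p j

namespace IsRootBalanced

variable {c : Fin N → ℕ} {s : ℕ}

lemma one : IsRootBalanced k (fun _ : Fin N => 1) 0 where
  eq_one_or _ := Or.inl rfl
  childCount_eq _ _ := by simp [childCount]
  childCount_succ_le _ _ _ := by simp [childCount]

lemma childCount_eq_of_lt (h : IsRootBalanced k c s) {j p : ℕ} {x : Fin N} (hj : j < k)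
    (hle : ∀ i, c i = j + 2 → i ≤ x) (hp : (x : ℕ) < p) : childCount c p j = s := by
  rw [childCount_eq_total_of_forall_lt fun i hi => lt_of_le_of_lt (hle i hi) hp,
    h.childCount_eq j hj]

lemma childCount_lt_of_le (h : IsRootBalanced k c s) {j p : ℕ} {x : Fin N} (hj : j < k)
    (hx : c x = j + 2) (hp : p ≤ x) : childCount c p j < s :=
  h.childCount_eq j hj ▸ childCount_lt_total_of_le hx hp

lemma eq_one (h : IsRootBalanced k c 0) : c = fun _ => 1 := by
  funext i
  refine (h.eq_one_or i).resolve_right fun ⟨j, hj, hi⟩ => ?_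
  exact Nat.not_lt_zero _ (h.childCount_lt_of_le hj hi (Nat.zero_le i))

lemma fireStepAt_one {c' : Fin N → ℕ} (h : IsRootBalanced k c s)
    (hstep : FireStepAt k N 1 c c') : IsRootBalanced k c' (s + 1) := by
  obtain ⟨t, ht, hc, hc', hrest⟩ := fireStepAt_one_iff.1 hstep
  have hcount := childCount_eq_add_of_fire ht.injective hc hc' hrest
  refine ⟨fun i => ?_, fun j hj => ?_, fun p j hj => ?_⟩
  · by_cases hi : ∃ j, i = t j
    · obtain ⟨j, rfl⟩ := hi
      exact Or.inr ⟨j, j.isLt, hc' j⟩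
    · push Not at hi
      rw [hrest i hi]
      exact h.eq_one_or i
  · simp [hcount N ⟨j, hj⟩, h.childCount_eq j hj]
  · have hlt : (t ⟨j, by omega⟩ : ℕ) < t ⟨j + 1, hj⟩ := ht (Fin.mk_lt_mk.2 j.lt_succ_self)
    have h1 := hcount p ⟨j + 1, hj⟩
    have h0 := hcount p ⟨j, by omega⟩
    have hb := h.childCount_succ_le p j hj
    simp only at h1 h0
    rw [h1, h0]
    split_ifs <;> omega

lemma of_reflTransGen (h : ReflTransGen (FireStepAt k N 1) (fun _ => 1) c) :
    ∃ s, IsRootBalanced k c s := by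
  induction h with
  | refl => exact ⟨0, one⟩
  | tail _ hstep ih =>
    obtain ⟨s, hs⟩ := ih
    exact ⟨s + 1, hs.fireStepAt_one hstep⟩

lemma strictMono_of_isGreatest (h : IsRootBalanced k c s) {last : Fin k → Fin N}
    (hlast : ∀ j : Fin k, c (last j) = j + 2) (hle : ∀ (j : Fin k) i, c i = j + 2 → i ≤ last j) :
    StrictMono last := by
  refine strictMono_fin_of_lt_succ fun j hj => lt_of_not_ge fun hge => ?_
  have hne : last ⟨j + 1, hj⟩ ≠ last ⟨j, by omega⟩ := fun heq => by
    have := hlast ⟨j, by omega⟩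
    rw [← heq, hlast] at this
    simp at this
  have h1 := h.childCount_eq_of_lt hj (hle ⟨j + 1, hj⟩) (Nat.lt_add_one _)
  have h0 := h.childCount_lt_of_le (p := last ⟨j + 1, hj⟩ + 1) (by omega) (hlast ⟨j, by omega⟩)
    (lt_of_le_of_ne hge hne)
  have hb := h.childCount_succ_le (last ⟨j + 1, hj⟩ + 1) j hj
  simp only at h1 h0
  omega

lemma exists_fireStepAt_one_of_isGreatest (h : IsRootBalanced k c (s + 1))
    {last : Fin k → Fin N} (hlast : ∀ j : Fin k, c (last j) = j + 2)
    (hle : ∀ (j : Fin k) i, c i = j + 2 → i ≤ last j) :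
    ∃ c₀, IsRootBalanced k c₀ s ∧ FireStepAt k N 1 c₀ c := by
  classical
  let c₀ (i : Fin N) : ℕ := if i ∈ Set.range last then 1 else c i
  have hmono := h.strictMono_of_isGreatest hlast hle
  have hc₀ (j : Fin k) : c₀ (last j) = 1 := if_pos ⟨j, rfl⟩
  have hrest (i : Fin N) (hi : ∀ j, i ≠ last j) : c i = c₀ i :=
    (if_neg fun ⟨j, hj⟩ => hi j hj.symm).symm
  have hcount := childCount_eq_add_of_fire hmono.injective hc₀ hlast hrest
  refine ⟨c₀, ⟨fun i => ?_, fun j hj => ?_, fun p j hj => ?_⟩,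
    fireStepAt_one_iff.2 ⟨last, hmono, hc₀, hlast, hrest⟩⟩
  · by_cases hi : i ∈ Set.range last
    · exact Or.inl (if_pos hi)
    · rw [show c₀ i = c i from if_neg hi]
      exact h.eq_one_or i
  · have := hcount N ⟨j, hj⟩
    simp only [Fin.is_lt, if_true, h.childCount_eq j hj] at this
    omega
  · have hlt : (last ⟨j, by omega⟩ : ℕ) < last ⟨j + 1, hj⟩ :=
      hmono (Fin.mk_lt_mk.2 j.lt_succ_self)
    have h1 := hcount p ⟨j + 1, hj⟩
    have h0 := hcount p ⟨j, by omega⟩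
    have hb := h.childCount_succ_le p j hj
    simp only at h1 h0
    split_ifs at h1 h0 with hp1 hp0 hp0
    · omega
    · omega
    -- between the two largest labels: child `j` is already complete, child `j + 1` is not
    · have := h.childCount_eq_of_lt (j := j) (by omega) (hle ⟨j, by omega⟩) hp0
      have := h.childCount_lt_of_le hj (hlast ⟨j + 1, hj⟩) (not_lt.1 hp1)
      omega
    · omega

lemma exists_fireStepAt_one (h : IsRootBalanced k c (s + 1)) :
    ∃ c₀, IsRootBalanced k c₀ s ∧ FireStepAt k N 1 c₀ c := by
  have hne (j : Fin k) : ({i | c i = j + 2} : Finset (Fin N)).Nonempty := by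
    have := h.childCount_eq j j.isLt
    simp only [childCount, Fin.is_lt, true_and] at this
    exact card_pos.1 (by omega)
  exact h.exists_fireStepAt_one_of_isGreatest
    (last := fun j => ({i | c i = j + 2} : Finset (Fin N)).max' (hne j))
    (fun j => by simpa using max'_mem _ (hne j)) (fun j i hi => le_max' _ i (by simpa using hi))

lemma reflTransGen (h : IsRootBalanced k c s) :
    ReflTransGen (FireStepAt k N 1) (fun _ => 1) c := by
  induction s generalizing c with
  | zero => rw [h.eq_one]
  | succ s ih =>
    obtain ⟨c₀, h₀, hstep⟩ := h.exists_fireStepAt_one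
    exact (ih h₀).tail hstep

end IsRootBalanced

theorem reflTransGen_fireStepAt_one_iff {c : Fin N → ℕ} :
    ReflTransGen (FireStepAt k N 1) (fun _ => 1) c ↔ ∃ s, IsRootBalanced k c s :=
  ⟨IsRootBalanced.of_reflTransGen, fun ⟨_, h⟩ => h.reflTransGen⟩

end RootFiring

section Dispersion

variable {k N : ℕ}

lemma childCount_add_two (d : Fin N → Fin k) (p j : ℕ) :
    childCount (fun i => (d i : ℕ) + 2) p j = #{i : Fin N | (i : ℕ) < p ∧ (d i : ℕ) = j} := by
  simp [childCount]

lemma childCount_add_two_total (d : Fin N → Fin k) (v : Fin k) :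
    childCount (fun i => (d i : ℕ) + 2) N v = #{i | d i = v} := by
  simp [childCount_add_two, Fin.ext_iff]

lemma exists_isRootBalanced_iff_mem_catalanSet {m : ℕ} (a : Fin (k * m) → Fin k) :
    (∃ s, IsRootBalanced k (fun i => (a i : ℕ) + 2) s) ↔ a ∈ CatalanSet k m := by
  constructor
  · rintro ⟨s, h⟩
    have hfiber (v : Fin k) : #{i | a i = v} = s := by
      rw [← childCount_add_two_total, h.childCount_eq v v.isLt]
    refine ⟨fun v => ?_, fun p j hj => ?_⟩
    · have hsum : k * m = k * s := by
        simpa [hfiber] using card_eq_sum_card_fiberwise (f := a) (s := univ) (t := univ)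
          fun _ _ => mem_univ _
      rw [hfiber, Nat.eq_of_mul_eq_mul_left (Fin.pos v) hsum]
    · simpa only [childCount_add_two] using h.childCount_succ_le p j hj
  · intro ha
    refine ⟨m, fun i => Or.inr ⟨a i, (a i).isLt, rfl⟩, fun j hj => ?_, fun p j hj => ?_⟩
    · exact (childCount_add_two_total a ⟨j, hj⟩).trans (ha.1 ⟨j, hj⟩)
    · simpa only [childCount_add_two] using ha.2 p j hj

lemma ncard_reachable_eq_ncard_catalanSet {m : ℕ} (hN : N = k * m) :
    {d : Fin N → Fin k |
      ReflTransGen (FireStepAt k N 1) (fun _ => 1) (fun i => (d i : ℕ) + 2)}.ncard =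
      (CatalanSet k m).ncard := by
  subst hN
  simp_rw [reflTransGen_fireStepAt_one_iff, exists_isRootBalanced_iff_mem_catalanSet,
    Set.ofPred_mem_eq]

lemma dispersions_eq (k ℓ : ℕ) : Dispersions k ℓ =
    {d | ReflTransGen (FireStepAt k (k ^ ℓ) 1) (fun _ => 1) (fun i => (d i : ℕ) + 2)} := by
  ext d
  constructor
  · rintro ⟨c, hc, -, hd⟩
    obtain rfl : c = _ := funext hd
    exact hc
  · exact fun h => ⟨_, h, fun _ => by omega, fun _ => rfl⟩

end Dispersion

theorem stmt2 (k ℓ : ℕ) (hℓ : 1 ≤ ℓ) :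
    (Dispersions k ℓ).ncard = (CatalanSet k (k ^ (ℓ - 1))).ncard := by
  rw [dispersions_eq]
  exact ncard_reachable_eq_ncard_catalanSet (by rw [← pow_succ', Nat.sub_add_cancel hℓ])
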